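/- The characteristic polynomial of the geometric lattice ℰ^n equals that of the partition lattice of an (n+1)-set: χ_{ℰ^n}(x) := Σ_{(A,P) ∈ ℰ^N} μ_{ℰ^N}((∅,P_⊥),(A,P)) · x^{n − r(A,P)} = (x−1)(x−2)⋯(x−n). -/

import Mathlib

open scoped BigOperators

/-- `modp n A` is the modular partition `P^A_⊥` of `Fin n` whose unique (possibly)
non-singleton block is `A`, all other blocks being singletons. -/
def modp (n : ℕ) (A : Set (Fin n)) : Setoid (Fin n) where
  r x y := x = y ∨ (x ∈ A ∧ y ∈ A)
  iseqv := by
    refine ⟨fun _ => Or.inl rfl, ?_, ?_⟩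
    · rintro x y (rfl | ⟨hx, hy⟩)
      · exact Or.inl rfl
      · exact Or.inr ⟨hy, hx⟩
    · rintro x y z (rfl | ⟨hx, hy⟩) h
      · exact h
      · rcases h with rfl | ⟨hy', hz⟩
        · exact Or.inr ⟨hx, hy⟩
        · exact Or.inr ⟨hx, hz⟩

/-- The product `X^N = 2^N × 𝒫^N` of the subset lattice and the partition lattice,
ordered componentwise. -/
abbrev XN (n : ℕ) := Set (Fin n) × Setoid (Fin n)

/-- The closure operator `cl` on `X^N`:  `cl(∅,P) = (∅,P)` and, for `A ≠ ∅`,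
`cl(A,P) = (Ā, P ⊔ P^A_⊥)` where `Ā` is the block of `P ⊔ P^A_⊥` containing `A`. -/
def EmbClosure (n : ℕ) (x : XN n) : XN n :=
  ({y | ∃ a ∈ x.1, (x.2 ⊔ modp n x.1) y a}, x.2 ⊔ modp n x.1)

/-- An embedded subset is a pair that coincides with its closure. -/
def IsEmbedded (n : ℕ) (x : XN n) : Prop := EmbClosure n x = x

/-- The lattice `ℰ^N` of embedded subsets, with the induced order. -/
abbrev Emb (n : ℕ) := {x : XN n // IsEmbedded n x}

lemma modp_le_of_subsingleton {n : ℕ} {A : Set (Fin n)} (h : A.Subsingleton)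
    (Q : Setoid (Fin n)) : modp n A ≤ Q := by
  rw [Setoid.le_def]
  intro x y hxy
  rcases hxy with rfl | ⟨hx, hy⟩
  · exact Q.refl' x
  · obtain rfl := h hx hy
    exact Q.refl' x

lemma modp_eq_bot_of_subsingleton {n : ℕ} {A : Set (Fin n)} (h : A.Subsingleton) :
    modp n A = ⊥ :=
  le_antisymm (modp_le_of_subsingleton h ⊥) bot_le

lemma embedded_empty (n : ℕ) (Q : Setoid (Fin n)) : IsEmbedded n (∅, Q) := by
  unfold IsEmbedded EmbClosure
  refine Prod.ext ?_ ?_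
  · simp
  · simpa using sup_eq_left.mpr (modp_le_of_subsingleton Set.subsingleton_empty Q)

lemma embedded_univ_top (n : ℕ) : IsEmbedded n (Set.univ, ⊤) := by
  unfold IsEmbedded EmbClosure
  refine Prod.ext ?_ ?_
  · ext y
    simp only [Set.mem_setOf_eq, Set.mem_univ, iff_true]
    exact ⟨y, trivial, Setoid.refl' _ y⟩
  · exact sup_eq_left.mpr le_top

lemma embedded_singleton (n : ℕ) (i : Fin n) : IsEmbedded n ({i}, ⊥) := by
  have hb : modp n ({i} : Set (Fin n)) = ⊥ :=
    modp_eq_bot_of_subsingleton Set.subsingleton_singleton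
  unfold IsEmbedded EmbClosure
  refine Prod.ext ?_ ?_
  · ext y
    simp only [Set.mem_setOf_eq, hb, sup_idem, Set.mem_singleton_iff]
    constructor
    · rintro ⟨a, ha, hrel⟩
      subst ha
      change ((⊥ : Setoid (Fin n)) ⊔ modp n {a}) y a at hrel
      rw [hb, sup_idem] at hrel
      simpa [Setoid.bot_def] using hrel
    · rintro rfl
      exact ⟨y, rfl, Setoid.refl' _ y⟩
  · simp [hb]

/-- The bottom element `(∅, P_⊥)` of `ℰ^N`. -/
def botE (n : ℕ) : Emb n := ⟨(∅, ⊥), embedded_empty n ⊥⟩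

/-- The top element `(N, P^⊤)` of `ℰ^N`. -/
def topE (n : ℕ) : Emb n := ⟨(Set.univ, ⊤), embedded_univ_top n⟩

/-- The atom `({i}, P_⊥)` of `ℰ^N`. -/
def atomS (n : ℕ) (i : Fin n) : Emb n := ⟨({i}, ⊥), embedded_singleton n i⟩

/-- The atom `(∅, [ij])` of `ℰ^N`, where `[ij]` is the atom of the partition lattice
whose unique non-singleton block is the pair `{i, j}`. -/
def atomP (n : ℕ) (i j : Fin n) : Emb n := ⟨(∅, modp n {i, j}), embedded_empty n _⟩

/-- A pair is an atom candidate: of the form `({i},P_⊥)` or `(∅,[ij])` with `i ≠ j`. -/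
def IsAtomPair (n : ℕ) (a : XN n) : Prop :=
  (∃ i : Fin n, a = ({i}, ⊥)) ∨ ∃ i j : Fin n, i ≠ j ∧ a = (∅, modp n {i, j})

/-- The number of blocks `|P|` of a partition. -/
noncomputable def numBlocks {α : Type*} (P : Setoid α) : ℕ := P.classes.ncard

/-- The rank function `r(A,P) = (n − |P|) + min{|A|,1}` of `ℰ^N`. -/
noncomputable def erank (n : ℕ) (x : XN n) : ℕ := (n - numBlocks x.2) + min x.1.ncard 1

/-- The partition `Q^S` of `S` induced by a partition `Q` of `N`. -/
def indPart {n : ℕ} (S : Set (Fin n)) (Q : Setoid (Fin n)) : Setoid S :=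
  Setoid.comap Subtype.val Q

/-- `mu` is the Möbius function of the (finite) poset `α`. -/
def IsMobius {α : Type*} [PartialOrder α] (mu : α → α → ℤ) : Prop :=
  (∀ x, mu x x = 1) ∧
  (∀ x y, ¬x ≤ y → mu x y = 0) ∧
  (∀ x y, x < y → mu x y = -∑ᶠ z ∈ Set.Ico x y, mu x z)

/-!
Adjoin an extra point `∗` to `N`, modelled by `none : Option (Fin n)`. The embedded subset
`(A, P)` becomes the partition of `N ∪ {∗}` whose blocks are those of `P`, with `∗` joined to the
block `A` (or `{∗}` a block of its own if `A = ∅`); it has `n - r(A,P) + 1` blocks. Conversely the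
fibres of a colouring `h : N ∪ {∗} → {0, …, t-1}` cut out an embedded subset, which lies above
`(A, P)` iff `h` is constant on the blocks of that partition; so `t ^ (n - r(A,P) + 1)` colourings
lie above `(A, P)`, and only the injective ones give the bottom element. Möbius inversion over
`ℰ^N` then yields `t · χ(t) = t (t-1) ⋯ (t-n)` for every natural `t`, hence as polynomials.
-/

open Finset Polynomial

instance Setoid.instFinite {α : Type*} [Finite α] : Finite (Setoid α) :=
  Finite.of_injective (fun s : Setoid α => ⇑s) fun _ _ => Setoid.eq_iff_rel_eq.2

theorem numBlocks_eq_card_quotient {α : Type*} (P : Setoid α) :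
    numBlocks P = Nat.card (Quotient P) := by
  rw [numBlocks, ← Nat.card_coe_set_eq, Nat.card_congr (Setoid.quotientEquivClasses P)]

theorem descPochhammer_succ_eval_eq_mul_prod {R : Type*} [CommRing R] (n : ℕ) (r : R) :
    (descPochhammer R (n + 1)).eval r = r * ∏ k ∈ Icc 1 n, (r - k) := by
  induction n with
  | zero => simp
  | succ n ih => rw [descPochhammer_succ_eval, ih, prod_Icc_succ_top (by omega), mul_assoc]

namespace IsMobius

variable {α : Type*} [PartialOrder α] [Fintype α] [DecidableEq α] [DecidableLE α]
  {mu : α → α → ℤ}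

theorem sum_filter_le_eq_ite (hmu : IsMobius mu) (a y : α) :
    ∑ x ∈ univ.filter (· ≤ y), mu a x = if y = a then 1 else 0 := by
  classical
  have hsupport : ∑ x ∈ univ.filter (· ≤ y), mu a x =
      ∑ x ∈ univ.filter (fun x => a ≤ x ∧ x ≤ y), mu a x := by
    rw [← sum_filter_of_ne (p := (a ≤ ·)) fun x _ hx => not_imp_comm.1 (hmu.2.1 a x) hx,
      filter_filter]
    simp only [and_comm]
  rw [hsupport]
  by_cases hay : a ≤ y
  · rcases hay.eq_or_lt with rfl | hlt
    · rw [if_pos rfl, sum_eq_single_of_mem a (by simp) fun x hx hxa => ?_, hmu.1]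
      simp only [mem_filter, mem_univ, true_and] at hx
      exact absurd (le_antisymm hx.2 hx.1) hxa
    · have hsplit : univ.filter (fun x => a ≤ x ∧ x ≤ y) =
          insert y (univ.filter fun x => a ≤ x ∧ x < y) := by
        ext x
        simp only [mem_filter, mem_univ, true_and, mem_insert]
        constructor
        · rintro ⟨hax, hxy⟩
          exact hxy.eq_or_lt.imp id (⟨hax, ·⟩)
        · rintro (rfl | ⟨hax, hxy⟩)
          exacts [⟨hlt.le, le_rfl⟩, ⟨hax, hxy.le⟩]
      have hIco : Set.Ico a y = ↑(univ.filter fun x => a ≤ x ∧ x < y) := by ext; simp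
      rw [hsplit, sum_insert (by simp), hmu.2.2 a y hlt, hIco, finsum_mem_coe_finset,
        neg_add_cancel, if_neg hlt.ne']
  · rw [if_neg (fun h => hay h.ge), sum_eq_zero]
    intro x hx
    simp only [mem_filter, mem_univ, true_and] at hx
    exact absurd (hx.1.trans hx.2) hay

theorem sum_mul_card_filter_le {H : Type*} [Fintype H] (hmu : IsMobius mu) (κ : H → α)
    (a : α) : ∑ x, mu a x * #{h | x ≤ κ h} = #{h | κ h = a} := by
  simp only [natCast_card_filter, mul_sum, mul_ite, mul_one, mul_zero]
  rw [sum_comm]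
  simp only [← sum_filter, hmu.sum_filter_le_eq_ite]

end IsMobius

section Embedded

variable {n : ℕ}

theorem modp_le_iff {A : Set (Fin n)} {P : Setoid (Fin n)} :
    modp n A ≤ P ↔ ∀ a ∈ A, ∀ b ∈ A, P a b := by
  refine ⟨fun h a ha b hb => h (Or.inr ⟨ha, hb⟩), ?_⟩
  rintro h x y (rfl | ⟨hx, hy⟩)
  exacts [P.refl' x, h x hx y hy]

theorem isEmbedded_iff {A : Set (Fin n)} {P : Setoid (Fin n)} :
    IsEmbedded n (A, P) ↔ (∀ a ∈ A, ∀ b ∈ A, P a b) ∧ ∀ a ∈ A, ∀ b, P b a → b ∈ A := by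
  have hsup : P ⊔ modp n A = P ↔ ∀ a ∈ A, ∀ b ∈ A, P a b := sup_eq_left.trans modp_le_iff
  simp only [IsEmbedded, EmbClosure, Prod.ext_iff]
  constructor
  · rintro ⟨hA, hP⟩
    exact ⟨hsup.1 hP, fun a ha b hba => hA ▸ ⟨a, ha, hP.symm ▸ hba⟩⟩
  · rintro ⟨hAP, hclosed⟩
    have hP := hsup.2 hAP
    refine ⟨?_, hP⟩
    rw [hP]
    ext y
    exact ⟨fun ⟨a, ha, hya⟩ => hclosed a ha y hya, fun hy => ⟨y, hy, P.refl' y⟩⟩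

namespace Emb

theorem rel_of_mem (x : Emb n) {a b : Fin n} (ha : a ∈ x.val.1) (hb : b ∈ x.val.1) :
    x.val.2 a b :=
  (isEmbedded_iff.1 x.2).1 a ha b hb

theorem mem_of_rel (x : Emb n) {a b : Fin n} (ha : a ∈ x.val.1) (hba : x.val.2 b a) :
    b ∈ x.val.1 :=
  (isEmbedded_iff.1 x.2).2 a ha b hba

def extSetoid (x : Emb n) : Setoid (Option (Fin n)) where
  r u v := match u, v with
    | some a, some b => x.val.2 a b
    | some a, none => a ∈ x.val.1
    | none, some b => b ∈ x.val.1
    | none, none => True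
  iseqv := by
    refine ⟨?_, ?_, ?_⟩
    · rintro (_ | a)
      exacts [trivial, x.val.2.refl' a]
    · rintro (_ | a) (_ | b) h
      exacts [trivial, h, h, x.val.2.symm' h]
    · rintro (_ | a) (_ | b) (_ | c) h h'
      exacts [trivial, h', trivial, x.mem_of_rel h (x.val.2.symm' h'), h, x.rel_of_mem h h',
        x.mem_of_rel h' h, x.val.2.trans' h h']

def ofFun {β : Type*} (h : Option (Fin n) → β) : Emb n :=
  ⟨({i | h (some i) = h none}, Setoid.ker (h ∘ some)), isEmbedded_iff.2
    ⟨fun _ ha _ hb => ha.trans hb.symm, fun _ ha _ hba => hba.trans ha⟩⟩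

theorem le_ofFun_iff {β : Type*} (x : Emb n) (h : Option (Fin n) → β) :
    x ≤ ofFun h ↔ x.extSetoid ≤ Setoid.ker h := by
  refine ⟨?_, fun H => ⟨fun a ha => @H (some a) none ha, fun a b hab => @H (some a) (some b) hab⟩⟩
  rintro ⟨hA, hP⟩ (_ | a) (_ | b) huv
  exacts [rfl, (hA huv).symm, hA huv, hP huv]

theorem ofFun_eq_botE_iff {β : Type*} (h : Option (Fin n) → β) :
    ofFun h = botE n ↔ Function.Injective h := by
  rw [Option.injective_iff, ← Setoid.ker_eq_bot_iff, Subtype.ext_iff, Prod.ext_iff, and_comm]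
  refine and_congr Iff.rfl ?_
  simp only [ofFun, botE, Set.eq_empty_iff_forall_notMem, Set.mem_ofPred_eq, Set.mem_range,
    Function.comp_apply, not_exists]

def quotientExtSetoidEquivOption (x : Emb n) (hA : x.val.1 = ∅) :
    Quotient x.extSetoid ≃ Option (Quotient x.val.2) where
  toFun := Quotient.lift (Option.map (Quotient.mk x.val.2)) <| by
    rintro (_ | a) (_ | b) hab
    · rfl
    · exact absurd (hA ▸ hab : b ∈ (∅ : Set (Fin n))) (Set.notMem_empty b)
    · exact absurd (hA ▸ hab : a ∈ (∅ : Set (Fin n))) (Set.notMem_empty a)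
    · exact congrArg some (Quotient.sound hab)
  invFun o := o.elim (Quotient.mk _ none)
    (Quotient.lift (fun a => Quotient.mk x.extSetoid (some a)) fun _ _ hab => Quotient.sound hab)
  left_inv := by
    apply Quotient.ind
    rintro (_ | a) <;> rfl
  right_inv := by
    rintro (_ | q)
    · rfl
    · induction q using Quotient.ind
      rfl

def quotientExtSetoidEquiv (x : Emb n) {a₀ : Fin n} (ha₀ : a₀ ∈ x.val.1) :
    Quotient x.extSetoid ≃ Quotient x.val.2 where
  toFun := Quotient.lift (fun u => Quotient.mk x.val.2 (u.getD a₀)) <| by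
    rintro (_ | a) (_ | b) hab
    · rfl
    · exact Quotient.sound (x.rel_of_mem ha₀ hab)
    · exact Quotient.sound (x.rel_of_mem hab ha₀)
    · exact Quotient.sound hab
  invFun :=
    Quotient.lift (fun a => Quotient.mk x.extSetoid (some a)) fun _ _ hab => Quotient.sound hab
  left_inv := by
    apply Quotient.ind
    rintro (_ | a)
    · exact Quotient.sound (show x.extSetoid (some a₀) none from ha₀)
    · rfl
  right_inv := by
    apply Quotient.ind
    intro a
    rfl

theorem card_quotient_extSetoid (x : Emb n) :
    Nat.card (Quotient x.extSetoid) = n - erank n x.val + 1 := by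
  have hle : Nat.card (Quotient x.val.2) ≤ n := by
    simpa using Nat.card_le_card_of_surjective _ (Quotient.mk_surjective (s := x.val.2))
  rw [erank, numBlocks_eq_card_quotient]
  rcases x.val.1.eq_empty_or_nonempty with hA | ⟨a₀, ha₀⟩
  · rw [Nat.card_congr (x.quotientExtSetoidEquivOption hA), Finite.card_option, hA,
      Set.ncard_empty]
    omega
  · have : Nonempty (Quotient x.val.2) := ⟨⟦a₀⟧⟩
    have hP : 0 < Nat.card (Quotient x.val.2) := Nat.card_pos
    have hA : 0 < x.val.1.ncard := (Set.ncard_pos (Set.toFinite _)).2 ⟨a₀, ha₀⟩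
    rw [Nat.card_congr (x.quotientExtSetoidEquiv ha₀)]
    omega

noncomputable instance : Fintype (Emb n) := Fintype.ofFinite _

open scoped Classical in
theorem card_filter_le_ofFun (x : Emb n) (t : ℕ) :
    #{h : Option (Fin n) → Fin t | x ≤ ofFun h} = t ^ (n - erank n x.val + 1) := by
  simp_rw [le_ofFun_iff]
  rw [← Fintype.card_subtype, ← Nat.card_eq_fintype_card, Nat.card_congr (Setoid.liftEquiv _),
    Nat.card_fun, card_quotient_extSetoid, Nat.card_fin]

open scoped Classical in
theorem card_filter_ofFun_eq_botE (t : ℕ) :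
    #{h : Option (Fin n) → Fin t | ofFun h = botE n} = t.descFactorial (n + 1) := by
  simp_rw [ofFun_eq_botE_iff]
  rw [← Fintype.card_subtype, Fintype.card_congr (Equiv.subtypeInjectiveEquivEmbedding _ _),
    Fintype.card_embedding_eq]
  simp

theorem sum_mobius_mul_pow_succ {mu : Emb n → Emb n → ℤ} (hmu : IsMobius mu) (t : ℕ) :
    ∑ x, mu (botE n) x * (t : ℤ) ^ (n - erank n x.val + 1) = t.descFactorial (n + 1) := by
  classical
  simpa [card_filter_le_ofFun, card_filter_ofFun_eq_botE] using
    hmu.sum_mul_card_filter_le (ofFun : (Option (Fin n) → Fin t) → Emb n) (botE n)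

end Emb

end Embedded

theorem char_poly_general (n : ℕ) (mu : Emb n → Emb n → ℤ) (hmu : IsMobius mu) :
    ∀ t : ℝ, ∑ᶠ x : Emb n, (mu (botE n) x : ℝ) * t ^ (n - erank n x.val) =
      ∏ k ∈ Finset.Icc 1 n, (t - (k : ℝ)) := by
  classical
  let χ : ℝ[X] := ∑ x : Emb n, C (mu (botE n) x : ℝ) * X ^ (n - erank n x.val)
  have hnat : ∀ m : ℕ, (m : ℝ) * χ.eval (m : ℝ) = m * ∏ k ∈ Icc 1 n, ((m : ℝ) - k) := by
    intro m
    have hcount := congrArg (Int.cast : ℤ → ℝ) (Emb.sum_mobius_mul_pow_succ hmu m)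
    push_cast at hcount
    rw [← descPochhammer_succ_eval_eq_mul_prod, descPochhammer_eval_eq_descFactorial, ← hcount]
    simp only [χ, eval_finsetSum, eval_mul, eval_C, eval_pow, eval_X, mul_sum, pow_succ]
    exact sum_congr rfl fun _ _ => by ring
  have hχ : X * χ = X * ∏ k ∈ Icc 1 n, (X - C (k : ℝ)) := by
    refine eq_of_infinite_eval_eq _ _
      ((Set.infinite_range_of_injective Nat.cast_injective).mono ?_)
    rintro _ ⟨m, rfl⟩
    simpa [eval_prod] using hnat m
  intro t
  rw [finsum_eq_sum_of_fintype]
  simpa [χ, eval_finsetSum, eval_prod] using congrArg (eval t) (mul_left_cancel₀ X_ne_zero hχ)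

theorem char_poly (n : ℕ) (hn : 1 ≤ n) (mu : Emb n → Emb n → ℤ) (hmu : IsMobius mu) :
    ∀ t : ℝ, ∑ᶠ x : Emb n, (mu (botE n) x : ℝ) * t ^ (n - erank n x.val) =
      ∏ k ∈ Finset.Icc 1 n, (t - (k : ℝ)) :=
  char_poly_general n mu hmu
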